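/- For any vectors q, q₀, w in ℝ² and constants p ≥ 0, η₀ > 0, H > 0, define R(q) = log₂(1 + η₀·p/(H² + ‖q − w‖²)) and R_lb(q) = R(q₀) − η₀·p·log₂(e)·(‖q − w‖² − ‖q₀ − w‖²)/((H² + ‖q₀ − w‖²)·(H² + ‖q₀ − w‖² + η₀·p)). Then R(q) ≥ R_lb(q) for all q, with equality at q = q₀. -/
import Mathlib

lemma aux_log_tangent (a b c : ℝ) (ha : 0 < a) (hb : 0 < b) (hc : 0 ≤ c) :
    Real.log (1 + c / a) - c * (b - a) / (a * (a + c)) ≤ Real.log (1 + c / b) := by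
  have hac : 0 < a + c := by linarith
  have hbc : 0 < b + c := by linarith
  have h1 : (0:ℝ) < 1 + c / a := by positivity
  have h2 : (0:ℝ) < 1 + c / b := by positivity
  have key : Real.log ((1 + c/a) / (1 + c/b)) ≤ (1 + c/a)/(1 + c/b) - 1 :=
    Real.log_le_sub_one_of_pos (by positivity)
  rw [Real.log_div (ne_of_gt h1) (ne_of_gt h2)] at key
  have heq : (1 + c/a)/(1 + c/b) - 1 = c * (b - a) / (a * (b + c)) := by
    field_simp
    ring
  rw [heq] at key
  have step : c * (b - a) / (a * (b + c)) ≤ c * (b - a) / (a * (a + c)) := by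
    rw [div_le_div_iff₀ (by positivity) (by positivity)]
    nlinarith [mul_nonneg (mul_nonneg hc ha.le) (sq_nonneg (b - a))]
  linarith

theorem stmt_3 (p η₀ H : ℝ) (hp : 0 ≤ p) (hη : 0 < η₀) (hH : 0 < H)
    (w q₀ : EuclideanSpace ℝ (Fin 2))
    (R Rlb : EuclideanSpace ℝ (Fin 2) → ℝ)
    (hR : ∀ q, R q = Real.logb 2 (1 + η₀ * p / (H ^ 2 + ‖q - w‖ ^ 2)))
    (hRlb : ∀ q, Rlb q = R q₀ -
      η₀ * p * Real.logb 2 (Real.exp 1) * (‖q - w‖ ^ 2 - ‖q₀ - w‖ ^ 2) /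
        ((H ^ 2 + ‖q₀ - w‖ ^ 2) * (H ^ 2 + ‖q₀ - w‖ ^ 2 + η₀ * p))) :
    (∀ q, R q ≥ Rlb q) ∧ R q₀ = Rlb q₀ := by
  have hlog2 : 0 < Real.log 2 := Real.log_pos one_lt_two
  constructor
  · intro q
    set a := H ^ 2 + ‖q₀ - w‖ ^ 2 with ha_def
    set b := H ^ 2 + ‖q - w‖ ^ 2 with hb_def
    set c := η₀ * p with hc_def
    have ha : 0 < a := by positivity
    have hb : 0 < b := by positivity
    have hc : 0 ≤ c := by positivity
    have key := aux_log_tangent a b c ha hb hc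
    have h1 : Rlb q = (Real.log (1 + c / a) - c * (b - a) / (a * (a + c))) / Real.log 2 := by
      rw [hRlb, hR]
      simp only [Real.logb, Real.log_exp]
      field_simp
      ring
    have h2 : R q = Real.log (1 + c / b) / Real.log 2 := by
      rw [hR]; rfl
    rw [ge_iff_le, h1, h2]
    gcongr
  · rw [hRlb]
    simp
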